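/- arXiv:2403.04117 — 8 statements merged into one kernel-verified Lean document; each statement's English description precedes it below -/
import Mathlib

section
/- Let m ≠ 0 be a real number and define F : ℝ → ℝ by F(x) = 1 - x · ∫₀ˣ ((y²+1)^{m/2} - 1)/y² dy (the integrand extends continuously to y=0). Then for all x > 0, (d/dx)(F(x)/x) = -(1+x²)^{m/2}/x². -/
/-!
For `t ≠ 0`, `F(t)/t = 1/t - ∫₀ᵗ g` with `g(y) = ((y²+1)^{m/2} - 1)/y²`, so by the fundamental
theorem of calculus the derivative at `x > 0` is `-1/x² - g(x) = -(1+x²)^{m/2}/x²`. The theorem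
applies because `g`, redefined at `0` to be the derivative `m/2` of `u ↦ (u+1)^{m/2}` at `0`, is
continuous, and changing `g` at one point does not change its integrals.
-/

open Real

/-- The function `F(x) = 1 - x ∫₀ˣ ((y²+1)^{m/2} - 1)/y² dy`, which coincides with the
hypergeometric function `₂F₁(-1/2, -m/2, 1/2, -x²)`. -/
noncomputable def hgF (m : ℝ) (x : ℝ) : ℝ :=
  1 - x * ∫ y in (0:ℝ)..x, ((y ^ 2 + 1) ^ (m / 2) - 1) / y ^ 2

open Filter Topology MeasureTheory Function

lemma tendsto_sq_nhdsNE_zero : Tendsto (fun y : ℝ => y ^ 2) (𝓝[≠] 0) (𝓝[≠] 0) :=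
  tendsto_nhdsWithin_of_tendsto_nhds_of_eventually_within _
    ((continuous_pow 2).tendsto' 0 0 (zero_pow two_ne_zero) |>.mono_left nhdsWithin_le_nhds)
    (eventually_nhdsWithin_of_forall fun _ hy => pow_ne_zero 2 hy)

lemma HasDerivAt.tendsto_sub_div_sq {f : ℝ → ℝ} {f' : ℝ} (hf : HasDerivAt f f' 0) :
    Tendsto (fun y => (f (y ^ 2) - f 0) / y ^ 2) (𝓝[≠] 0) (𝓝 f') := by
  have hslope := (hasDerivAt_iff_tendsto_slope_zero.mp hf).comp tendsto_sq_nhdsNE_zero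
  refine hslope.congr fun y => ?_
  simp [div_eq_inv_mul]

lemma hasDerivAt_add_one_rpow_zero (p : ℝ) : HasDerivAt (fun u : ℝ => (u + 1) ^ p) p 0 := by
  simpa using ((hasDerivAt_id (0 : ℝ)).add_const 1).rpow_const (p := p) (by norm_num)

lemma continuous_update_rpow_sub_one_div_sq (p : ℝ) :
    Continuous (update (fun y : ℝ => ((y ^ 2 + 1) ^ p - 1) / y ^ 2) 0 p) := by
  refine continuous_iff_continuousAt.2 fun y => ?_
  rcases eq_or_ne y 0 with rfl | hy
  · simpa using (hasDerivAt_add_one_rpow_zero p).tendsto_sub_div_sq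
  · rw [continuousAt_update_of_ne hy]
    refine ContinuousAt.div ?_ (by fun_prop) (pow_ne_zero 2 hy)
    have hpos : ∀ z : ℝ, z ^ 2 + 1 ≠ 0 := fun z => by positivity
    fun_prop (disch := exact Or.inl (hpos _))

lemma hasDerivAt_integral_of_continuous_update {g : ℝ → ℝ} {a c b x : ℝ}
    (hg : Continuous (update g a c)) (hx : x ≠ a) :
    HasDerivAt (fun t => ∫ y in b..t, g y) (g x) x := by
  have hint : ∀ t, ∫ y in b..t, g y = ∫ y in b..t, update g a c y := fun t =>
    intervalIntegral.integral_congr_ae <| (Measure.ae_ne volume a).mono fun y hy _ =>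
      (update_of_ne hy c g).symm
  simpa only [hint, update_of_ne hx] using (hg.integral_hasStrictDerivAt b x).hasDerivAt

theorem deriv_hgF_div_self_general (m : ℝ) :
    ∀ x > (0 : ℝ),
      deriv (fun t => hgF m t / t) x = -(1 + x ^ 2) ^ (m / 2) / x ^ 2 := by
  intro x hx
  have hderiv := (hasDerivAt_inv hx.ne').sub <|
    hasDerivAt_integral_of_continuous_update (b := 0)
      (continuous_update_rpow_sub_one_div_sq (m / 2)) hx.ne'
  have hF : (fun t => hgF m t / t) =ᶠ[𝓝 x] fun t => t⁻¹ - ∫ y in (0:ℝ)..t,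
      ((y ^ 2 + 1) ^ (m / 2) - 1) / y ^ 2 := by
    filter_upwards [eventually_ne_nhds hx.ne'] with t ht
    rw [hgF]
    field_simp
  rw [(hderiv.congr_of_eventuallyEq hF).deriv]
  field_simp
  ring_nf

/-- For `m ≠ 0` and `x > 0`, `(d/dx)(F(x)/x) = -(1+x²)^{m/2}/x²`. -/
theorem deriv_hgF_div_self (m : ℝ) (hm : m ≠ 0) :
    ∀ x > (0 : ℝ),
      deriv (fun t => hgF m t / t) x = -(1 + x ^ 2) ^ (m / 2) / x ^ 2 :=
  deriv_hgF_div_self_general m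
end

section
/- Let m > 0 and F(x) = 1 - x · ∫₀ˣ ((y²+1)^{m/2} - 1)/y² dy. Then F has exactly one zero x₂ in (0, ∞), and this zero is simple in the sense that F'(x₂) = -(1+x₂²)^{m/2}/x₂ < 0. -/
open Real

section hgFAux

open MeasureTheory intervalIntegral

/-- The integrand in `hgF`. -/
noncomputable def hgFg (m : ℝ) (y : ℝ) : ℝ := ((y ^ 2 + 1) ^ (m / 2) - 1) / y ^ 2

/-- A bound for `hgFg` on `[0, b]`. -/
noncomputable def hgFC (m b : ℝ) : ℝ := (⌈m/2⌉₊ : ℝ) * (1 + b^2) ^ (⌈m/2⌉₊ : ℕ)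

lemma hgFg_nonneg (m : ℝ) (hm : 0 < m) (y : ℝ) : 0 ≤ hgFg m y := by
  apply div_nonneg _ (sq_nonneg y)
  have : (1:ℝ) ≤ (y^2+1) ^ (m/2) :=
    Real.one_le_rpow (by nlinarith [sq_nonneg y]) (by positivity)
  linarith

lemma hgFg_pos (m : ℝ) (hm : 0 < m) {y : ℝ} (hy : 0 < y) : 0 < hgFg m y := by
  apply div_pos _ (by positivity)
  have : (1:ℝ) < (y^2+1) ^ (m/2) :=
    Real.one_lt_rpow (by nlinarith) (by positivity)
  linarith

lemma hgF_pow_aux (t : ℝ) (ht : 0 ≤ t) : ∀ n : ℕ, (1 + t) ^ n ≤ 1 + n * t * (1 + t) ^ n := by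
  intro n
  induction n with
  | zero => simp
  | succ k ih =>
    have h1 : (1:ℝ) ≤ (1+t)^k := one_le_pow₀ (by linarith)
    have h2 : (0:ℝ) ≤ (1+t)^k := by positivity
    push_cast
    rw [pow_succ]
    nlinarith [ih, mul_nonneg (mul_nonneg (Nat.cast_nonneg (α := ℝ) k) (mul_self_nonneg t)) h2,
      mul_nonneg (mul_self_nonneg t) h2]

lemma hgFg_meas (m : ℝ) : Measurable (hgFg m) := by
  unfold hgFg
  fun_prop

lemma hgFg_le (m : ℝ) (hm : 0 < m) {b y : ℝ} (h0 : 0 ≤ y) (hyb : y ≤ b) :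
    hgFg m y ≤ hgFC m b := by
  set n : ℕ := ⌈m/2⌉₊ with hn
  have hCnn : (0:ℝ) ≤ hgFC m b := by unfold hgFC; positivity
  rcases eq_or_lt_of_le h0 with h|h
  · simpa [hgFg, ← h] using hCnn
  · rw [hgFg, div_le_iff₀ (by positivity)]
    have h1 : (y^2+1) ^ (m/2) ≤ (y^2+1) ^ ((n:ℝ)) := by
      apply Real.rpow_le_rpow_of_exponent_le (by nlinarith) (Nat.le_ceil _)
    rw [Real.rpow_natCast] at h1
    have h2 : (y^2+1) ^ n ≤ 1 + n * y^2 * (y^2+1)^n := by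
      have := hgF_pow_aux (y^2) (by positivity) n
      simpa [add_comm] using this
    have h3 : (y^2 + 1)^n ≤ (1 + b^2)^n := by
      apply pow_le_pow_left₀ (by positivity) (by nlinarith)
    unfold hgFC
    rw [← hn]
    nlinarith [mul_le_mul_of_nonneg_left h3 (mul_nonneg (Nat.cast_nonneg (α := ℝ) n) (sq_nonneg y))]

lemma hgFg_intble (m : ℝ) (hm : 0 < m) {b : ℝ} (hb : 0 ≤ b) :
    IntervalIntegrable (hgFg m) volume 0 b := by
  have hCnn : (0:ℝ) ≤ hgFC m b := by unfold hgFC; positivity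
  apply IntervalIntegrable.mono_fun' (g := fun _ => hgFC m b)
    (intervalIntegrable_const) (hgFg_meas m).aestronglyMeasurable
  filter_upwards [ae_restrict_mem measurableSet_uIoc] with y hy
  rw [Set.uIoc_of_le hb] at hy
  rw [Real.norm_of_nonneg (hgFg_nonneg m hm y)]
  exact hgFg_le m hm hy.1.le hy.2

lemma hgFg_contAt (m : ℝ) {x : ℝ} (hx : x ≠ 0) : ContinuousAt (hgFg m) x := by
  have h1 : ContinuousAt (fun y : ℝ => (y^2+1) ^ (m/2)) x := by
    apply ContinuousAt.rpow_const (by fun_prop)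
    left; positivity
  exact (h1.sub continuousAt_const).div (by fun_prop) (by positivity)

lemma hgF_hasDeriv (m : ℝ) (hm : 0 < m) {x : ℝ} (hx : 0 < x) :
    HasDerivAt (hgF m) (-(∫ y in (0:ℝ)..x, hgFg m y) - x * hgFg m x) x := by
  have hG : HasDerivAt (fun u => ∫ y in (0:ℝ)..u, hgFg m y) (hgFg m x) x := by
    apply intervalIntegral.integral_hasDerivAt_right (hgFg_intble m hm hx.le)
      ((hgFg_meas m).aestronglyMeasurable.stronglyMeasurableAtFilter)
      (hgFg_contAt m hx.ne')
  have h2 : HasDerivAt (fun u : ℝ => 1 - u * ∫ y in (0:ℝ)..u, hgFg m y)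
      (0 - (1 * (∫ y in (0:ℝ)..x, hgFg m y) + x * hgFg m x)) x :=
    (hasDerivAt_const x (1:ℝ)).sub ((hasDerivAt_id x).mul hG)
  have : hgF m = fun u : ℝ => 1 - u * ∫ y in (0:ℝ)..u, hgFg m y := rfl
  rw [this]
  convert h2 using 1
  ring

end hgFAux

/-- For `m > 0`, `F` has exactly one zero `x₂` in `(0, ∞)`, and it is simple:
`F'(x₂) = -(1+x₂²)^{m/2}/x₂ < 0`. -/
theorem hgF_unique_pos_zero (m : ℝ) (hm : 0 < m) :
    ∃ x₂ > (0 : ℝ), hgF m x₂ = 0 ∧ (∀ x > (0 : ℝ), hgF m x = 0 → x = x₂) ∧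
      deriv (hgF m) x₂ = -(1 + x₂ ^ 2) ^ (m / 2) / x₂ ∧ deriv (hgF m) x₂ < 0 := by
  open MeasureTheory in
  have hCnn : 0 ≤ hgFC m 1 := by unfold hgFC; positivity
  have hderiv : ∀ x : ℝ, 0 < x →
      deriv (hgF m) x = -(∫ y in (0:ℝ)..x, hgFg m y) - x * hgFg m x :=
    fun x hx => (hgF_hasDeriv m hm hx).deriv
  have hGnn : ∀ x : ℝ, 0 < x → 0 ≤ ∫ y in (0:ℝ)..x, hgFg m y := fun x hx =>
    intervalIntegral.integral_nonneg hx.le (fun y _ => hgFg_nonneg m hm y)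
  have hdneg : ∀ x : ℝ, 0 < x → deriv (hgF m) x < 0 := by
    intro x hx
    rw [hderiv x hx]
    have := hgFg_pos m hm hx
    nlinarith [hGnn x hx]
  have hcont : ∀ x : ℝ, 0 < x → ContinuousAt (hgF m) x :=
    fun x hx => (hgF_hasDeriv m hm hx).continuousAt
  have hanti : StrictAntiOn (hgF m) (Set.Ioi 0) := by
    apply strictAntiOn_of_deriv_neg (convex_Ioi 0)
      (fun x hx => (hcont x hx).continuousWithinAt)
    rw [interior_Ioi]
    exact fun x hx => hdneg x hx
  -- F(ε) > 0
  set ε : ℝ := 1 / (hgFC m 1 + 1) with hε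
  have hεpos : 0 < ε := by positivity
  have hε1 : ε ≤ 1 := by
    rw [hε, div_le_one (by linarith)]; linarith
  have hFε : 0 < hgF m ε := by
    have hint : (∫ y in (0:ℝ)..ε, hgFg m y) ≤ ε * hgFC m 1 := by
      calc (∫ y in (0:ℝ)..ε, hgFg m y) ≤ ∫ _ in (0:ℝ)..ε, hgFC m 1 := by
            apply intervalIntegral.integral_mono_on hεpos.le (hgFg_intble m hm hεpos.le)
              intervalIntegrable_const
            intro y hy
            exact hgFg_le m hm hy.1 (le_trans hy.2 hε1)
        _ = ε * hgFC m 1 := by simp [mul_comm]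
    have : hgF m ε = 1 - ε * ∫ y in (0:ℝ)..ε, hgFg m y := rfl
    rw [this]
    have h2 : ε * (∫ y in (0:ℝ)..ε, hgFg m y) ≤ ε * (ε * hgFC m 1) :=
      mul_le_mul_of_nonneg_left hint hεpos.le
    have hεC : 0 ≤ ε * hgFC m 1 := by positivity
    have h5 : ε * hgFC m 1 < 1 := by
      rw [hε, div_mul_eq_mul_div, div_lt_one (by linarith)]
      linarith
    have h3 : ε * (ε * hgFC m 1) < 1 := by
      nlinarith [mul_le_mul_of_nonneg_right hε1 hεC]
    linarith
  -- F(X) < 0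
  set c₀ : ℝ := ((2:ℝ) ^ (m/2) - 1) / 4 with hc₀
  have hc₀pos : 0 < c₀ := by
    have : (1:ℝ) < (2:ℝ) ^ (m/2) := Real.one_lt_rpow (by norm_num) (by positivity)
    rw [hc₀]; linarith
  set X : ℝ := 2 + 2 / c₀ with hX
  have hX2 : 2 ≤ X := by
    have : 0 < 2 / c₀ := by positivity
    rw [hX]; linarith
  have hXpos : (0:ℝ) < X := by linarith
  have hi01 : IntervalIntegrable (hgFg m) volume 0 1 := hgFg_intble m hm (by norm_num)
  have hi12 : IntervalIntegrable (hgFg m) volume 1 2 :=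
    (hgFg_intble m hm (by norm_num : (0:ℝ) ≤ 2)).mono_set
      (by rw [Set.uIcc_of_le (by norm_num : (1:ℝ) ≤ 2), Set.uIcc_of_le (by norm_num : (0:ℝ) ≤ 2)]
          exact Set.Icc_subset_Icc (by norm_num) le_rfl)
  have hi02 : IntervalIntegrable (hgFg m) volume 0 2 := hi01.trans hi12
  have hi2X : IntervalIntegrable (hgFg m) volume 2 X :=
    (hgFg_intble m hm hXpos.le).mono_set
      (by rw [Set.uIcc_of_le hX2, Set.uIcc_of_le hXpos.le]
          exact Set.Icc_subset_Icc (by norm_num) le_rfl)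
  have hFX : hgF m X < 0 := by
    have h12 : c₀ ≤ ∫ y in (1:ℝ)..2, hgFg m y := by
      calc c₀ = ∫ _ in (1:ℝ)..2, c₀ := by
            rw [intervalIntegral.integral_const]; norm_num
        _ ≤ ∫ y in (1:ℝ)..2, hgFg m y := by
            apply intervalIntegral.integral_mono_on (by norm_num) intervalIntegrable_const hi12
            intro y hy
            have hy1 : (1:ℝ) ≤ y := hy.1
            have hy2 : y ≤ 2 := hy.2
            have h2le : (2:ℝ) ≤ y^2 + 1 := by nlinarith
            have hrp : (2:ℝ) ^ (m/2) ≤ (y^2+1) ^ (m/2) :=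
              Real.rpow_le_rpow (by norm_num) h2le (by positivity)
            rw [hc₀]
            show ((2:ℝ)^(m/2) - 1)/4 ≤ ((y^2+1)^(m/2) - 1)/y^2
            apply div_le_div₀ (by linarith) (by linarith) (by positivity) (by nlinarith)
    have hsplit : (∫ y in (0:ℝ)..X, hgFg m y) =
        ((∫ y in (0:ℝ)..1, hgFg m y) + (∫ y in (1:ℝ)..2, hgFg m y))
          + (∫ y in (2:ℝ)..X, hgFg m y) := by
      rw [intervalIntegral.integral_add_adjacent_intervals hi01 hi12,
          intervalIntegral.integral_add_adjacent_intervals hi02 hi2X]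
    have h01 : 0 ≤ ∫ y in (0:ℝ)..1, hgFg m y :=
      intervalIntegral.integral_nonneg (by norm_num) (fun y _ => hgFg_nonneg m hm y)
    have h2X : 0 ≤ ∫ y in (2:ℝ)..X, hgFg m y :=
      intervalIntegral.integral_nonneg hX2 (fun y _ => hgFg_nonneg m hm y)
    have hGX : c₀ ≤ ∫ y in (0:ℝ)..X, hgFg m y := by rw [hsplit]; linarith
    have : hgF m X = 1 - X * ∫ y in (0:ℝ)..X, hgFg m y := rfl
    rw [this]
    have hXc : 2 ≤ X * c₀ := by
      rw [hX]
      have : (2 + 2/c₀) * c₀ = 2 * c₀ + 2 := by field_simp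
      rw [this]; nlinarith
    nlinarith [mul_le_mul_of_nonneg_left hGX hXpos.le]
  -- IVT: existence of a zero
  have hεX : ε ≤ X := by linarith
  have hcontIcc : ContinuousOn (hgF m) (Set.Icc ε X) := fun x hx =>
    (hcont x (lt_of_lt_of_le hεpos hx.1)).continuousWithinAt
  have hIVT := intermediate_value_Icc' hεX hcontIcc
  obtain ⟨x₂, hx₂mem, hFx₂⟩ := hIVT ⟨hFX.le, hFε.le⟩
  have hx₂pos : 0 < x₂ := lt_of_lt_of_le hεpos hx₂mem.1
  refine ⟨x₂, hx₂pos, hFx₂, ?_, ?_, ?_⟩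
  · intro x hx hFx
    rcases lt_trichotomy x x₂ with h|h|h
    · exact absurd (hanti hx hx₂pos h) (by rw [hFx, hFx₂]; simp)
    · exact h
    · exact absurd (hanti hx₂pos hx h) (by rw [hFx, hFx₂]; simp)
  · have hG1 : (∫ y in (0:ℝ)..x₂, hgFg m y) = 1 / x₂ := by
      have : hgF m x₂ = 1 - x₂ * ∫ y in (0:ℝ)..x₂, hgFg m y := rfl
      rw [this] at hFx₂
      field_simp
      linarith
    rw [hderiv x₂ hx₂pos, hG1]
    show -(1/x₂) - x₂ * (((x₂^2+1)^(m/2) - 1)/x₂^2) = -(1 + x₂^2)^(m/2)/x₂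
    rw [show (1:ℝ) + x₂^2 = x₂^2 + 1 from by ring]
    field_simp
    ring
  · exact hdneg x₂ hx₂pos
end

section
/- Let m > 0 and F(x) = 1 - x · ∫₀ˣ ((y²+1)^{m/2} - 1)/y² dy, extended to ℝ as an even function. Then F has exactly two zeros on ℝ, at ±x₂ for some x₂ > 0, and F'(x₂) = -F'(-x₂). -/
open Real

noncomputable def hgG (p : ℝ) (y : ℝ) : ℝ :=
  if y = 0 then p else ((y ^ 2 + 1) ^ p - 1) / y ^ 2

lemma hgG_pos {p : ℝ} (hp : 0 < p) (y : ℝ) : 0 < hgG p y := by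
  unfold hgG
  split_ifs with h
  · exact hp
  · have hy2 : 0 < y ^ 2 := by positivity
    have h1 : (1 : ℝ) < (y ^ 2 + 1) ^ p :=
      Real.one_lt_rpow (by linarith) hp
    exact div_pos (by linarith) hy2

lemma hgG_tendsto {p : ℝ} :
    Filter.Tendsto (fun y : ℝ => ((y ^ 2 + 1) ^ p - 1) / y ^ 2) (nhdsWithin 0 {(0:ℝ)}ᶜ)
      (nhds p) := by
  have h1 : HasDerivAt (fun x : ℝ => x ^ p) (p * (1:ℝ) ^ (p - 1)) 1 :=
    Real.hasDerivAt_rpow_const (Or.inl one_ne_zero)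
  have h2 : HasDerivAt (fun t : ℝ => (t + 1) ^ p) p 0 := by
    have h3 : HasDerivAt (fun t : ℝ => t + 1) 1 0 := (hasDerivAt_id 0).add_const 1
    have h4 := h3.rpow_const (p := p) (Or.inl (by norm_num))
    simpa using h4
  have hslope := hasDerivAt_iff_tendsto_slope.mp h2
  have hsq : Filter.Tendsto (fun y : ℝ => y ^ 2) (nhdsWithin 0 {(0:ℝ)}ᶜ)
      (nhdsWithin 0 {(0:ℝ)}ᶜ) := by
    rw [tendsto_nhdsWithin_iff]
    constructor
    · have : Filter.Tendsto (fun y : ℝ => y ^ 2) (nhds 0) (nhds 0) := by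
        simpa using (continuous_pow 2).tendsto (0:ℝ)
      exact this.mono_left nhdsWithin_le_nhds
    · filter_upwards [self_mem_nhdsWithin] with y hy
      exact pow_ne_zero 2 hy
  have := hslope.comp hsq
  apply this.congr
  intro y
  simp [Function.comp, slope_def_field]

lemma hgG_continuous {p : ℝ} (hp : 0 < p) : Continuous (hgG p) := by
  rw [continuous_iff_continuousAt]
  intro y
  rcases eq_or_ne y 0 with rfl | hy
  · -- continuity at 0
    unfold ContinuousAt
    have h0 : hgG p 0 = p := by simp [hgG]
    rw [h0, ← nhdsNE_sup_pure (0:ℝ), Filter.tendsto_sup]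
    constructor
    · apply hgG_tendsto.congr'
      filter_upwards [self_mem_nhdsWithin] with z hz
      have hz' : z ≠ 0 := hz
      simp [hgG, hz']
    · have ht := tendsto_pure_nhds (hgG p) 0
      rwa [h0] at ht
  · have hev' : ∀ᶠ z in nhds y, ((z ^ 2 + 1) ^ p - 1) / z ^ 2 = hgG p z := by
      filter_upwards [isOpen_compl_singleton.mem_nhds hy] with z hz
      have hz' : z ≠ 0 := hz
      unfold hgG
      rw [if_neg hz']
    apply ContinuousAt.congr _ hev'
    have hc1 : ContinuousAt (fun z : ℝ => (z ^ 2 + 1) ^ p - 1) y := by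
      apply ContinuousAt.sub _ continuousAt_const
      exact (ContinuousAt.rpow_const ((continuous_pow 2).add continuous_const).continuousAt
        (Or.inr hp.le))
    exact hc1.div (continuous_pow 2).continuousAt (pow_ne_zero 2 hy)

lemma hgF_eq (m : ℝ) (hm : 0 < m) (x : ℝ) :
    hgF m x = 1 - x * ∫ y in (0:ℝ)..x, hgG (m/2) y := by
  unfold hgF
  congr 1
  congr 1
  apply intervalIntegral.integral_congr_ae
  have h0 : ∀ᵐ (z : ℝ), z ≠ 0 := by
    rw [MeasureTheory.ae_iff]
    simpa using Real.volume_singleton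
  filter_upwards [h0] with z hz _
  simp [hgG, hz]

lemma hgF_even (m : ℝ) (hm : 0 < m) (x : ℝ) : hgF m (-x) = hgF m x := by
  rw [hgF_eq m hm, hgF_eq m hm]
  have h1 : (∫ y in (0:ℝ)..(-x), hgG (m/2) y) = -∫ y in (0:ℝ)..x, hgG (m/2) y := by
    have h2 : (∫ y in (0:ℝ)..(-x), hgG (m/2) y) = ∫ y in (0:ℝ)..(-x), hgG (m/2) (-y) := by
      apply intervalIntegral.integral_congr
      intro y _
      simp [hgG, neg_eq_zero, neg_sq]
    rw [h2, intervalIntegral.integral_comp_neg,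
      show -(-x) = x from neg_neg x, show -(0:ℝ) = 0 from neg_zero]
    exact intervalIntegral.integral_symm 0 x
  rw [h1]; ring_nf

/-- For `m > 0`, the (even) function `F` has exactly two zeros on `ℝ`, at `±x₂` for some
`x₂ > 0`, and `F'(x₂) = -F'(-x₂)`. -/
theorem hgF_two_zeros (m : ℝ) (hm : 0 < m) :
    ∃ x₂ > (0 : ℝ), (∀ x : ℝ, hgF m x = 0 ↔ x = x₂ ∨ x = -x₂) ∧
      deriv (hgF m) x₂ = -deriv (hgF m) (-x₂) := by
  set p := m / 2 with hpdef
  have hp : 0 < p := by positivity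
  set I : ℝ → ℝ := fun x => ∫ y in (0:ℝ)..x, hgG p y with hIdef
  have hInt : ∀ a b : ℝ, IntervalIntegrable (hgG p) MeasureTheory.volume a b :=
    fun a b => (hgG_continuous hp).intervalIntegrable a b
  have hIcont : Continuous I := intervalIntegral.continuous_primitive hInt 0
  have hF : ∀ x, hgF m x = 1 - x * I x := fun x => hgF_eq m hm x
  have hImono : StrictMono I := by
    intro a b hab
    have hpos : 0 < ∫ y in a..b, hgG p y :=
      intervalIntegral.intervalIntegral_pos_of_pos (hInt a b) (hgG_pos hp) hab
    have hsub : I b - I a = ∫ y in a..b, hgG p y :=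
      intervalIntegral.integral_interval_sub_left (hInt 0 b) (hInt 0 a)
    linarith
  have hI0 : I 0 = 0 := by simp [hIdef]
  have hIpos : ∀ x : ℝ, 0 < x → 0 < I x := by
    intro x hx
    have := hImono hx
    rwa [hI0] at this
  have hanti : StrictAntiOn (hgF m) (Set.Ici 0) := by
    intro a ha b hb hab
    rw [hF a, hF b]
    have h1 : I a < I b := hImono hab
    have hb0 : 0 < b := lt_of_le_of_lt ha hab
    have h2 : 0 < I b := hIpos b hb0
    have ha0 : (0:ℝ) ≤ a := ha
    nlinarith
  have hFc : Continuous (hgF m) := by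
    have : hgF m = fun x => 1 - x * I x := funext hF
    rw [this]; fun_prop
  -- find the zero
  have hI1 : 0 < I 1 := hIpos 1 one_pos
  set X : ℝ := max 1 (2 / I 1) with hXdef
  have hX1 : (1:ℝ) ≤ X := le_max_left _ _
  have hX2 : 2 / I 1 ≤ X := le_max_right _ _
  have hXpos : 0 < X := lt_of_lt_of_le one_pos hX1
  have hFX : hgF m X < 0 := by
    rw [hF]
    have h1 : I 1 ≤ I X := hImono.monotone hX1
    have h2 : 2 ≤ X * I 1 := by
      rw [div_le_iff₀ hI1] at hX2
      linarith
    nlinarith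
  have hF0 : hgF m 0 = 1 := by rw [hF]; ring
  obtain ⟨x₂, hx₂mem, hx₂⟩ : ∃ c ∈ Set.Icc (0:ℝ) X, hgF m c = 0 := by
    have := intermediate_value_Icc' hXpos.le (hFc.continuousOn (s := Set.Icc 0 X))
    have h0mem : (0:ℝ) ∈ Set.Icc (hgF m X) (hgF m 0) := by
      rw [hF0]; exact ⟨hFX.le, one_pos.le⟩
    obtain ⟨c, hc, hc0⟩ := this h0mem
    exact ⟨c, hc, hc0⟩
  have hx₂pos : 0 < x₂ := by
    rcases hx₂mem.1.lt_or_eq with h | h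
    · exact h
    · exfalso; rw [← h] at hx₂; rw [hF0] at hx₂; norm_num at hx₂
  refine ⟨x₂, hx₂pos, ?_, ?_⟩
  · intro x
    constructor
    · intro hx
      have habs : hgF m |x| = 0 := by
        rcases abs_choice x with h | h
        · rwa [h]
        · rw [h, hgF_even m hm]; exact hx
      have : |x| = x₂ := by
        apply hanti.injOn (abs_nonneg x) hx₂pos.le
        rw [habs, hx₂]
      rcases abs_choice x with h | h
      · left; rw [← h]; exact this
      · right; rw [← this, h]; ring
    · rintro (rfl | rfl)
      · exact hx₂
      · rw [← neg_neg x₂] at hx₂ ⊢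
        rw [hgF_even m hm]; rwa [neg_neg] at hx₂ ⊢
  · have heq : (fun x => hgF m (-x)) = hgF m := funext (hgF_even m hm)
    calc deriv (hgF m) x₂ = deriv (fun x => hgF m (-x)) x₂ := by rw [heq]
      _ = -deriv (hgF m) (-x₂) := deriv_comp_neg (hgF m) x₂
end

section
/- Let m ≠ -1, λ, b, c be real constants and define B(x) = b·x·(x²+1)^{-m/2} + c·(x²+1)^{-m/2}·F(x) - λ(x²+1)/(m+1), where F(x) = 1 - x·∫₀ˣ ((y²+1)^{m/2}-1)/y² dy. Then B satisfies the ODE B''(x) + m/(x²+1)² · (x(x²+1)B'(x) + 2B(x)) + 2λ = 0 for all x ∈ ℝ. -/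
/-!
Put `B = (x²+1)^(-m/2) u + k (x²+1)` with `u = b x + c F` and `k = -λ/(m+1)`. Conjugation by
`(x²+1)^(-m/2)` turns the operator into `u ↦ u'' - m (x u' - u)/(x²+1)`, while it sends `x²+1`
to `2(m+1)`, which accounts for the `2λ`. The conjugated operator kills `x`, and it kills `F`
because `x F' - F = -(x²+1)^(m/2)` and `F'' = -m (x²+1)^(m/2-1)`. Writing the integrand of `F`
as a difference quotient at `0` makes it continuous, so these formulas hold at `x = 0` too.
-/

open Real

/-- The function `B` from (2.9) for `m ≠ -1`. -/
noncomputable def Bfun (m lam b c : ℝ) (x : ℝ) : ℝ :=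
  b * x * (x ^ 2 + 1) ^ (-m / 2) + c * (x ^ 2 + 1) ^ (-m / 2) * hgF m x
    - lam * (x ^ 2 + 1) / (m + 1)

lemma hasDerivAt_sq_add_one (y : ℝ) : HasDerivAt (fun t : ℝ => t ^ 2 + 1) (2 * y) y := by
  simpa using (hasDerivAt_pow 2 y).add_const 1

lemma hasDerivAt_sq_add_one_rpow (e y : ℝ) :
    HasDerivAt (fun t : ℝ => (t ^ 2 + 1) ^ e) (2 * e * y * (y ^ 2 + 1) ^ e / (y ^ 2 + 1)) y := by
  have hP : y ^ 2 + 1 ≠ 0 := by positivity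
  refine ((hasDerivAt_sq_add_one y).rpow_const (Or.inl hP)).congr_deriv ?_
  rw [rpow_sub_one hP]
  ring

/-- The integrand of `hgF`, written as the difference quotient of `t ↦ (t + 1) ^ (m / 2)` at `0`
evaluated at `y ^ 2`; this fills in its limit `m / 2` at `y = 0`. -/
noncomputable def hgKernel (m : ℝ) (y : ℝ) : ℝ :=
  dslope (fun t : ℝ => (t + 1) ^ (m / 2)) 0 (y ^ 2)

lemma continuous_hgKernel (m : ℝ) : Continuous (hgKernel m) := by
  have hf : ContinuousOn (fun t : ℝ => (t + 1) ^ (m / 2)) (Set.Ioi (-1)) := fun t ht =>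
    ((continuousAt_id.add continuousAt_const).rpow_const
      (Or.inl (by simp at ht ⊢; linarith))).continuousWithinAt
  have hd : DifferentiableAt ℝ (fun t : ℝ => (t + 1) ^ (m / 2)) 0 :=
    ((hasDerivAt_id' 0).add_const 1).rpow_const (Or.inl (by norm_num)) |>.differentiableAt
  exact ((continuousOn_dslope (Ioi_mem_nhds (by norm_num))).2 ⟨hf, hd⟩).comp_continuous
    (continuous_pow 2) fun y => by simp only [Set.mem_Ioi]; linarith [sq_nonneg y]

lemma sq_mul_hgKernel (m y : ℝ) : y ^ 2 * hgKernel m y = (y ^ 2 + 1) ^ (m / 2) - 1 := by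
  simpa [hgKernel] using sub_smul_dslope (fun t : ℝ => (t + 1) ^ (m / 2)) 0 (y ^ 2)

lemma hgKernel_of_ne_zero (m : ℝ) {y : ℝ} (hy : y ≠ 0) :
    hgKernel m y = ((y ^ 2 + 1) ^ (m / 2) - 1) / y ^ 2 := by
  rw [← sq_mul_hgKernel, mul_div_cancel_left₀ _ (pow_ne_zero 2 hy)]

lemma hgF_eq_integral_hgKernel (m x : ℝ) : hgF m x = 1 - x * ∫ y in (0:ℝ)..x, hgKernel m y := by
  refine congrArg (1 - x * ·) (intervalIntegral.integral_congr_ae ?_)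
  filter_upwards [MeasureTheory.measure_eq_zero_iff_ae_notMem.1 (Real.volume_singleton (a := 0))]
    with y hy _
  exact (hgKernel_of_ne_zero m hy).symm

lemma hasDerivAt_mul_hgKernel (m x : ℝ) :
    HasDerivAt (fun y => y * hgKernel m y)
      (m * (x ^ 2 + 1) ^ (m / 2) / (x ^ 2 + 1) - hgKernel m x) x := by
  have hK := continuous_hgKernel m
  refine hasDerivAt_of_hasDerivAt_of_ne' (x := 0)
    (g := fun y => m * (y ^ 2 + 1) ^ (m / 2) / (y ^ 2 + 1) - hgKernel m y) (fun y hy => ?_)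
    (continuous_id'.fun_mul hK).continuousAt ?_ x
  · have hquot := ((hasDerivAt_sq_add_one_rpow (m / 2) y).sub_const 1).fun_div (hasDerivAt_id' y) hy
    refine (hquot.congr_of_eventuallyEq ?_).congr_deriv ?_
    · filter_upwards [isOpen_ne.mem_nhds hy] with t ht
      rw [hgKernel_of_ne_zero m ht]
      field_simp
    · rw [hgKernel_of_ne_zero m hy]
      field_simp
  · have hP : ContinuousAt (fun t : ℝ => t ^ 2 + 1) 0 := by fun_prop
    exact (((hP.rpow_const (Or.inl (by norm_num))).const_mul m).div hP (by norm_num)).sub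
      hK.continuousAt

noncomputable def hgFDeriv (m x : ℝ) : ℝ :=
  -((∫ y in (0:ℝ)..x, hgKernel m y) + x * hgKernel m x)

lemma hasDerivAt_hgF (m x : ℝ) : HasDerivAt (hgF m) (hgFDeriv m x) x := by
  have hI := ((continuous_hgKernel m).integral_hasStrictDerivAt 0 x).hasDerivAt
  rw [show hgF m = _ from funext (hgF_eq_integral_hgKernel m)]
  exact (((hasDerivAt_id' x).fun_mul hI).const_sub 1).congr_deriv (by simp [hgFDeriv])

lemma hasDerivAt_hgFDeriv (m x : ℝ) :
    HasDerivAt (hgFDeriv m) (-(m * (x ^ 2 + 1) ^ (m / 2) / (x ^ 2 + 1))) x := by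
  have hI := ((continuous_hgKernel m).integral_hasStrictDerivAt 0 x).hasDerivAt
  exact (hI.fun_add (hasDerivAt_mul_hgKernel m x)).fun_neg.congr_deriv (by ring)

lemma mul_hgFDeriv_sub_hgF (m x : ℝ) : x * hgFDeriv m x - hgF m x = -(x ^ 2 + 1) ^ (m / 2) := by
  rw [hgF_eq_integral_hgKernel, hgFDeriv]
  linear_combination -sq_mul_hgKernel m x

noncomputable def quasiEinsteinOp (m : ℝ) (f : ℝ → ℝ) (x : ℝ) : ℝ :=
  deriv (deriv f) x + m / (x ^ 2 + 1) ^ 2 * (x * (x ^ 2 + 1) * deriv f x + 2 * f x)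

section Conjugation

variable {m : ℝ} {w u u' : ℝ → ℝ}

lemma hasDerivAt_mul_add_mul_sq_add_one (k : ℝ)
    (hw : ∀ y, HasDerivAt w (-(m * y * w y) / (y ^ 2 + 1)) y)
    (hu : ∀ y, HasDerivAt u (u' y) y) (y : ℝ) :
    HasDerivAt (fun t => w t * u t + k * (t ^ 2 + 1))
      (w y * (u' y - m * y * u y / (y ^ 2 + 1)) + 2 * k * y) y :=
  ((hw y).fun_mul (hu y)).fun_add ((hasDerivAt_sq_add_one y).const_mul k) |>.congr_deriv
    (by ring)

/-- `hw` says that `w` is a constant multiple of `(y ^ 2 + 1) ^ (-m / 2)`. -/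
theorem quasiEinsteinOp_mul_add_mul_sq_add_one (k : ℝ)
    (hw : ∀ y, HasDerivAt w (-(m * y * w y) / (y ^ 2 + 1)) y)
    (hu : ∀ y, HasDerivAt u (u' y) y) {x u'' : ℝ} (hu' : HasDerivAt u' u'' x) :
    quasiEinsteinOp m (fun t => w t * u t + k * (t ^ 2 + 1)) x
      = w x * (u'' - m * (x * u' x - u x) / (x ^ 2 + 1)) + 2 * (m + 1) * k := by
  rw [quasiEinsteinOp, funext fun y => (hasDerivAt_mul_add_mul_sq_add_one k hw hu y).deriv]
  have hmu := ((hasDerivAt_id' x).const_mul m).fun_mul (hu x)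
  rw [((hw x).fun_mul (hu'.fun_sub (hmu.fun_div (hasDerivAt_sq_add_one x)
    (by positivity)))).fun_add ((hasDerivAt_id' x).const_mul (2 * k)) |>.deriv]
  field_simp
  ring

end Conjugation

/-- `B` satisfies the ODE `B'' + m/(x²+1)² (x(x²+1)B' + 2B) + 2λ = 0`. -/
theorem Bfun_ode (m lam b c : ℝ) (hm : m ≠ -1) :
    ∀ x : ℝ,
      deriv (deriv (Bfun m lam b c)) x
        + m / (x ^ 2 + 1) ^ 2 *
            (x * (x ^ 2 + 1) * deriv (Bfun m lam b c) x + 2 * Bfun m lam b c x)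
        + 2 * lam = 0 := by
  intro x
  have hm1 : m + 1 ≠ 0 := fun h => hm (eq_neg_of_add_eq_zero_left h)
  have hB : Bfun m lam b c = fun t =>
      (t ^ 2 + 1) ^ (-m / 2) * (b * t + c * hgF m t) + -lam / (m + 1) * (t ^ 2 + 1) := by
    funext t
    rw [Bfun]
    ring
  have hw (y : ℝ) : HasDerivAt (fun t : ℝ => (t ^ 2 + 1) ^ (-m / 2))
      (-(m * y * (y ^ 2 + 1) ^ (-m / 2)) / (y ^ 2 + 1)) y :=
    (hasDerivAt_sq_add_one_rpow _ y).congr_deriv (by ring)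
  have hu (y : ℝ) : HasDerivAt (fun t => b * t + c * hgF m t) (b + c * hgFDeriv m y) y :=
    ((hasDerivAt_id' y).const_mul b).fun_add ((hasDerivAt_hgF m y).const_mul c) |>.congr_deriv
      (by ring)
  have hu' := ((hasDerivAt_hgFDeriv m x).const_mul c).const_add b
  change quasiEinsteinOp m (Bfun m lam b c) x + 2 * lam = 0
  rw [hB, quasiEinsteinOp_mul_add_mul_sq_add_one _ hw hu hu']
  generalize (x ^ 2 + 1) ^ (-m / 2) = w
  field_simp
  linear_combination (-(m * c) * w) * mul_hgFDeriv_sub_hgF m x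
end

section
/- Let m > 0, λ ≥ 0, and c > λ/(m+1). Define B(x) = c·(x²+1)^{-m/2}·F(x) - λ(x²+1)/(m+1) with F(x) = 1 - x·∫₀ˣ ((y²+1)^{m/2}-1)/y² dy. Then there exist x₁ < 0 < x₂ with B(x₁) = B(x₂) = 0 and B(x) > 0 for all x ∈ (x₁, x₂). -/
open Real

/-- The function `B` with `b = 0`. -/
noncomputable def B0 (m lam c : ℝ) (x : ℝ) : ℝ :=
  c * (x ^ 2 + 1) ^ (-m / 2) * hgF m x - lam * (x ^ 2 + 1) / (m + 1)

namespace B0aux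

/-- The integrand. -/
noncomputable def g (m y : ℝ) : ℝ := ((y ^ 2 + 1) ^ (m / 2) - 1) / y ^ 2

lemma g_nonneg {m : ℝ} (hm : 0 ≤ m) (y : ℝ) : 0 ≤ g m y := by
  apply div_nonneg _ (sq_nonneg y)
  have h1 : (1:ℝ) ≤ (y ^ 2 + 1) ^ (m / 2) :=
    Real.one_le_rpow (by nlinarith [sq_nonneg y]) (by linarith)
  linarith

lemma pow_aux (n : ℕ) {t : ℝ} (ht : 0 ≤ t) :
    (1 + t) ^ n - 1 ≤ n * t * (1 + t) ^ n := by
  induction n with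
  | zero => simp
  | succ n ih =>
    have h1 : (0:ℝ) ≤ (1 + t) ^ n := by positivity
    have h2 : (1:ℝ) ≤ (1 + t) ^ (n + 1) := one_le_pow₀ (by linarith)
    have e : (1 + t) ^ (n + 1) = (1 + t) ^ n * (1 + t) := pow_succ _ _
    have h3 := mul_le_mul_of_nonneg_left ih (by linarith : (0:ℝ) ≤ 1 + t)
    push_cast
    nlinarith [mul_nonneg ht (sub_nonneg.2 h2)]

lemma g_le {m : ℝ} (hm : 0 ≤ m) (y : ℝ) :
    g m y ≤ (⌈m / 2⌉₊ : ℝ) * (y ^ 2 + 1) ^ (⌈m / 2⌉₊) := by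
  rcases eq_or_ne y 0 with h | h
  · have hg0 : g m 0 = 0 := by simp [g]
    rw [h, hg0]
    positivity
  · have hy : 0 < y ^ 2 := by positivity
    have h1 : (y ^ 2 + 1) ^ (m / 2) ≤ (y ^ 2 + 1) ^ ((⌈m / 2⌉₊ : ℝ)) :=
      Real.rpow_le_rpow_of_exponent_le (by linarith) (Nat.le_ceil _)
    rw [Real.rpow_natCast] at h1
    have h2 := pow_aux ⌈m / 2⌉₊ hy.le
    have e : (1 + y ^ 2 : ℝ) = y ^ 2 + 1 := by ring
    rw [e] at h2
    rw [g, div_le_iff₀ hy]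
    nlinarith [h2, h1]

lemma g_measurable (m : ℝ) : Measurable (g m) := by
  have hc : Continuous fun y : ℝ => (y ^ 2 + 1) ^ (m / 2) :=
    Continuous.rpow_const ((continuous_pow 2).add continuous_const)
      (fun x => Or.inl (by positivity))
  exact ((hc.sub continuous_const).measurable).div ((continuous_pow 2).measurable)

lemma g_intervalIntegrable {m : ℝ} (hm : 0 ≤ m) (a b : ℝ) :
    IntervalIntegrable (g m) MeasureTheory.volume a b := by
  set R : ℝ := max |a| |b| with hR
  have hR0 : 0 ≤ R := le_trans (abs_nonneg a) (le_max_left _ _)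
  refine (intervalIntegrable_const
      (c := (⌈m / 2⌉₊ : ℝ) * (R ^ 2 + 1) ^ (⌈m / 2⌉₊))).mono_fun'
      ((g_measurable m).aestronglyMeasurable) ?_
  refine MeasureTheory.ae_restrict_of_forall_mem measurableSet_uIoc ?_
  intro y hy
  have hyR : |y| ≤ R := by
    rcases Set.mem_uIoc.1 hy with ⟨h1, h2⟩ | ⟨h1, h2⟩
    · have := neg_abs_le a; have := le_abs_self b
      have := le_max_left |a| |b|; have := le_max_right |a| |b|
      rw [abs_le]; constructor <;> linarith
    · have := neg_abs_le b; have := le_abs_self a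
      have := le_max_left |a| |b|; have := le_max_right |a| |b|
      rw [abs_le]; constructor <;> linarith
  have hy2 : y ^ 2 ≤ R ^ 2 := by nlinarith [abs_nonneg y, sq_abs y, sq_abs R]
  have h1 : g m y ≤ (⌈m / 2⌉₊ : ℝ) * (y ^ 2 + 1) ^ (⌈m / 2⌉₊) := g_le hm y
  have h2 : ((y : ℝ) ^ 2 + 1) ^ (⌈m / 2⌉₊) ≤ (R ^ 2 + 1) ^ (⌈m / 2⌉₊) :=
    pow_le_pow_left₀ (by positivity) (by linarith) _
  have h3 : (0:ℝ) ≤ (⌈m / 2⌉₊ : ℝ) := by positivity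
  show ‖g m y‖ ≤ (⌈m / 2⌉₊ : ℝ) * (R ^ 2 + 1) ^ (⌈m / 2⌉₊)
  rw [Real.norm_of_nonneg (g_nonneg hm y)]
  calc g m y ≤ (⌈m / 2⌉₊ : ℝ) * (y ^ 2 + 1) ^ (⌈m / 2⌉₊) := h1
    _ ≤ (⌈m / 2⌉₊ : ℝ) * (R ^ 2 + 1) ^ (⌈m / 2⌉₊) :=
        mul_le_mul_of_nonneg_left h2 h3

lemma hgF_cont {m : ℝ} (hm : 0 ≤ m) : Continuous (hgF m) := by
  unfold hgF
  exact continuous_const.sub (continuous_id.mul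
    (intervalIntegral.continuous_primitive (g_intervalIntegrable hm) 0))

lemma g_even (m x : ℝ) : g m (-x) = g m x := by
  simp [g, neg_sq]

lemma integral_neg {m : ℝ} (x : ℝ) :
    (∫ y in (0:ℝ)..(-x), g m y) = -∫ y in (0:ℝ)..x, g m y := by
  have h := intervalIntegral.integral_comp_neg (a := (0:ℝ)) (b := x) (f := g m)
  simp only [g_even, neg_zero] at h
  rw [h]
  exact intervalIntegral.integral_symm _ _

lemma hgF_even (m x : ℝ) : hgF m (-x) = hgF m x := by
  unfold hgF
  rw [show (∫ y in (0:ℝ)..(-x), ((y ^ 2 + 1) ^ (m / 2) - 1) / y ^ 2)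
      = ∫ y in (0:ℝ)..(-x), g m y from rfl,
    show (∫ y in (0:ℝ)..x, ((y ^ 2 + 1) ^ (m / 2) - 1) / y ^ 2)
      = ∫ y in (0:ℝ)..x, g m y from rfl, integral_neg]
  ring

/-- The auxiliary function `B̂`. -/
noncomputable def Bhat (m lam c x : ℝ) : ℝ :=
  c * hgF m x - lam * (x ^ 2 + 1) ^ (m / 2 + 1) / (m + 1)

lemma Bhat_even (m lam c x : ℝ) : Bhat m lam c (-x) = Bhat m lam c x := by
  simp [Bhat, hgF_even, neg_sq]

lemma B0_eq (m lam c x : ℝ) :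
    B0 m lam c x = (x ^ 2 + 1) ^ (-m / 2) * Bhat m lam c x := by
  have hx : (0:ℝ) < x ^ 2 + 1 := by positivity
  have key : (x ^ 2 + 1 : ℝ) ^ (-m / 2) * (x ^ 2 + 1) ^ (m / 2 + 1) = x ^ 2 + 1 := by
    rw [← Real.rpow_add hx, show -m / 2 + (m / 2 + 1) = 1 by ring, Real.rpow_one]
  unfold B0 Bhat
  linear_combination (lam / (m + 1)) * key

lemma Bhat_cont {m : ℝ} (hm : 0 ≤ m) (lam c : ℝ) : Continuous (Bhat m lam c) := by
  unfold Bhat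
  have h : Continuous fun x : ℝ => (x ^ 2 + 1) ^ (m / 2 + 1) :=
    Continuous.rpow_const ((continuous_pow 2).add continuous_const)
      (fun x => Or.inl (by positivity))
  exact (continuous_const.mul (hgF_cont hm)).sub
    ((continuous_const.mul h).div_const _)

lemma Bhat_zero (m lam c : ℝ) : Bhat m lam c 0 = c - lam / (m + 1) := by
  have h : hgF m 0 = 1 := by simp [hgF]
  rw [Bhat, h]
  norm_num

lemma Bhat_neg_far {m lam c : ℝ} (hm : 0 < m) (hlam : 0 ≤ lam) (hc0 : 0 < c) :
    ∃ X : ℝ, 0 ≤ X ∧ Bhat m lam c X < 0 := by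
  have hm' : 0 ≤ m := hm.le
  set ε : ℝ := ((2:ℝ) ^ (m / 2) - 1) / 4 with hε
  have h2 : (1:ℝ) < (2:ℝ) ^ (m / 2) :=
    (Real.one_lt_rpow_iff_of_pos (by norm_num)).2 (Or.inl ⟨one_lt_two, by linarith⟩)
  have hε0 : 0 < ε := by rw [hε]; linarith
  set X : ℝ := max 2 (1 / ε + 1) with hX
  have hX2 : (2:ℝ) ≤ X := le_max_left _ _
  have hX1 : 1 / ε < X := lt_of_lt_of_le (by linarith) (le_max_right _ _)
  have hXε : 1 < X * ε := (div_lt_iff₀ hε0).1 hX1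
  have hint : ∀ a b : ℝ, IntervalIntegrable (g m) MeasureTheory.volume a b :=
    g_intervalIntegrable hm'
  have hlow : ε ≤ ∫ y in (1:ℝ)..2, g m y := by
    have hmono : ∀ y ∈ Set.Icc (1:ℝ) 2, ε ≤ g m y := by
      intro y hy
      have hy1 : 1 ≤ y := hy.1
      have hy2 : y ≤ 2 := hy.2
      have ha : (2:ℝ) ≤ y ^ 2 + 1 := by nlinarith
      have hb : y ^ 2 ≤ 4 := by nlinarith
      have hnum : (2:ℝ) ^ (m / 2) ≤ (y ^ 2 + 1) ^ (m / 2) :=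
        Real.rpow_le_rpow (by norm_num) ha (by linarith)
      have := div_le_div₀ (by linarith : (0:ℝ) ≤ (y ^ 2 + 1) ^ (m / 2) - 1)
        (by linarith : (2:ℝ) ^ (m / 2) - 1 ≤ (y ^ 2 + 1) ^ (m / 2) - 1)
        (by nlinarith : (0:ℝ) < y ^ 2) hb
      rw [hε]
      exact this
    have h := intervalIntegral.integral_mono_on (by norm_num : (1:ℝ) ≤ 2)
      (intervalIntegrable_const (c := ε)) (hint 1 2) hmono
    rw [intervalIntegral.integral_const, smul_eq_mul] at h
    norm_num at h
    linarith
  have hsplit : ε ≤ ∫ y in (0:ℝ)..X, g m y := by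
    have e1 : (∫ y in (0:ℝ)..1, g m y) + (∫ y in (1:ℝ)..X, g m y)
        = ∫ y in (0:ℝ)..X, g m y :=
      intervalIntegral.integral_add_adjacent_intervals (hint 0 1) (hint 1 X)
    have e2 : (∫ y in (1:ℝ)..2, g m y) + (∫ y in (2:ℝ)..X, g m y)
        = ∫ y in (1:ℝ)..X, g m y :=
      intervalIntegral.integral_add_adjacent_intervals (hint 1 2) (hint 2 X)
    have n1 : 0 ≤ ∫ y in (0:ℝ)..1, g m y :=
      intervalIntegral.integral_nonneg (by norm_num) (fun y _ => g_nonneg hm' y)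
    have n2 : 0 ≤ ∫ y in (2:ℝ)..X, g m y :=
      intervalIntegral.integral_nonneg hX2 (fun y _ => g_nonneg hm' y)
    linarith
  refine ⟨X, by linarith, ?_⟩
  have hF : hgF m X ≤ 1 - X * ε := by
    unfold hgF
    rw [show (∫ y in (0:ℝ)..X, ((y ^ 2 + 1) ^ (m / 2) - 1) / y ^ 2)
        = ∫ y in (0:ℝ)..X, g m y from rfl]
    have h := mul_le_mul_of_nonneg_left hsplit (by linarith : (0:ℝ) ≤ X)
    linarith
  have hpos : 0 ≤ lam * (X ^ 2 + 1) ^ (m / 2 + 1) / (m + 1) := by positivity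
  have hle : Bhat m lam c X ≤ c * (1 - X * ε) := by
    unfold Bhat
    nlinarith [mul_le_mul_of_nonneg_left hF hc0.le]
  nlinarith

end B0aux

/-- Case 1: for `m > 0`, `λ ≥ 0`, `c > λ/(m+1)`, the function `B` has two zeros
`x₁ < 0 < x₂` and is positive between them. -/
theorem B0_two_zeros_case1 (m lam c : ℝ) (hm : 0 < m) (hlam : 0 ≤ lam)
    (hc : lam / (m + 1) < c) :
    ∃ x₁ x₂ : ℝ, x₁ < 0 ∧ 0 < x₂ ∧ B0 m lam c x₁ = 0 ∧ B0 m lam c x₂ = 0 ∧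
      ∀ x ∈ Set.Ioo x₁ x₂, 0 < B0 m lam c x := by
  have hm' : 0 ≤ m := hm.le
  have hm1 : (0:ℝ) < m + 1 := by linarith
  have hc0 : 0 < c := lt_of_le_of_lt (div_nonneg hlam hm1.le) hc
  have hB0pos : 0 < B0aux.Bhat m lam c 0 := by rw [B0aux.Bhat_zero]; linarith
  obtain ⟨X, hX0, hXneg⟩ := B0aux.Bhat_neg_far hm hlam hc0
  have cont := B0aux.Bhat_cont hm' lam c
  have hne : ∃ z, 0 ≤ z ∧ B0aux.Bhat m lam c z = 0 := by
    have h0 : (0:ℝ) ∈ Set.Icc (B0aux.Bhat m lam c X) (B0aux.Bhat m lam c 0) :=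
      ⟨hXneg.le, hB0pos.le⟩
    obtain ⟨z, hz, hz0⟩ := intermediate_value_Icc' hX0 cont.continuousOn h0
    exact ⟨z, hz.1, hz0⟩
  set S := {x : ℝ | 0 ≤ x ∧ B0aux.Bhat m lam c x = 0} with hS
  have hSne : S.Nonempty := hne
  have hSclosed : IsClosed S := by
    have hrw : S = Set.Ici 0 ∩ (B0aux.Bhat m lam c) ⁻¹' {0} := by
      ext x; simp [hS, Set.mem_Ici]
    rw [hrw]
    exact isClosed_Ici.inter (isClosed_singleton.preimage cont)
  have hSbdd : BddBelow S := ⟨0, fun x hx => hx.1⟩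
  set x₂ := sInf S with hx2
  have hx₂S : x₂ ∈ S := hSclosed.csInf_mem hSne hSbdd
  have hx₂pos : 0 < x₂ := by
    rcases lt_or_eq_of_le hx₂S.1 with h | h
    · exact h
    · exfalso
      have h2 := hx₂S.2
      rw [← h] at h2
      linarith
  have key : ∀ x, 0 ≤ x → x < x₂ → 0 < B0aux.Bhat m lam c x := by
    intro x hx hlt
    by_contra h
    push_neg at h
    have h0 : (0:ℝ) ∈ Set.Icc (B0aux.Bhat m lam c x) (B0aux.Bhat m lam c 0) :=
      ⟨h, hB0pos.le⟩
    obtain ⟨z, hz, hz0⟩ := intermediate_value_Icc' hx cont.continuousOn h0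
    have hle : x₂ ≤ z := csInf_le hSbdd ⟨hz.1, hz0⟩
    linarith [hz.2]
  refine ⟨-x₂, x₂, by linarith, hx₂pos, ?_, ?_, ?_⟩
  · rw [B0aux.B0_eq, B0aux.Bhat_even, hx₂S.2, mul_zero]
  · rw [B0aux.B0_eq, hx₂S.2, mul_zero]
  · rintro x ⟨h1, h2⟩
    rw [B0aux.B0_eq]
    refine mul_pos (Real.rpow_pos_of_pos (by positivity) _) ?_
    rcases le_or_gt 0 x with h | h
    · exact key x h h2
    · rw [← B0aux.Bhat_even]
      exact key (-x) (by linarith) (by linarith)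
end

section
/- Let m < -1, λ > 0, and c ∈ (λ/(m+1), 0). Define B̂(x) = c·F(x) + λ/|m+1|·(x²+1)^{m/2+1} with F(x) = 1 - x·∫₀ˣ ((y²+1)^{m/2}-1)/y² dy. Then B̂(0) > 0 and B̂(x) → -∞ as x → ∞; in particular B̂ has a zero in (0, ∞). -/
open Real

/-- `B̂(x) = c F(x) + λ/|m+1| (x²+1)^{m/2+1}`. -/
noncomputable def Bhat (m lam c : ℝ) (x : ℝ) : ℝ :=
  c * hgF m x + lam / |m + 1| * (x ^ 2 + 1) ^ (m / 2 + 1)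

/-- Bernoulli's inequality for nonpositive exponents. -/
lemma bern_aux {p s : ℝ} (hp : p ≤ 0) (hs : 0 ≤ s) : 1 + p * s ≤ (1 + s) ^ p := by
  rw [Real.rpow_def_of_pos (by linarith)]
  have h1 : Real.log (1 + s) ≤ s := by
    have := Real.log_le_sub_one_of_pos (x := 1 + s) (by linarith)
    linarith
  have h2 : 0 ≤ Real.log (1 + s) := Real.log_nonneg (by linarith)
  have h3 : Real.log (1 + s) * p + 1 ≤ Real.exp (Real.log (1 + s) * p) :=
    Real.add_one_le_exp _
  nlinarith

set_option maxHeartbeats 1000000 in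
/-- Case 3a: for `m < -1`, `λ > 0` and `c ∈ (λ/(m+1), 0)`, `B̂(0) > 0`,
`B̂(x) → -∞` as `x → ∞`, and in particular `B̂` has a positive zero. -/
theorem Bhat_case3a (m lam c : ℝ) (hm : m < -1) (hlam : 0 < lam)
    (hc₁ : lam / (m + 1) < c) (hc₂ : c < 0) :
    0 < Bhat m lam c 0 ∧
      Filter.Tendsto (Bhat m lam c) Filter.atTop Filter.atBot ∧
      ∃ x > (0 : ℝ), Bhat m lam c x = 0 := by
  set g : ℝ → ℝ := fun y => ((y ^ 2 + 1) ^ (m / 2) - 1) / y ^ 2 with hg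
  have hm2 : m / 2 ≤ 0 := by linarith
  -- basic pointwise facts about g
  have hg_nonpos : ∀ y, g y ≤ 0 := by
    intro y
    apply div_nonpos_of_nonpos_of_nonneg _ (by positivity)
    have : (y ^ 2 + 1) ^ (m / 2) ≤ 1 :=
      Real.rpow_le_one_of_one_le_of_nonpos (by nlinarith [sq_nonneg y]) hm2
    linarith
  have hg_neg : ∀ y : ℝ, y ≠ 0 → g y < 0 := by
    intro y hy
    apply div_neg_of_neg_of_pos _ (by positivity)
    have : (y ^ 2 + 1) ^ (m / 2) < 1 :=
      Real.rpow_lt_one_of_one_lt_of_neg (by nlinarith [sq_nonneg y, pow_pos (abs_pos.mpr hy) 2, sq_abs y]) (by linarith)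
    linarith
  have hg_bound : ∀ y, |g y| ≤ -(m / 2) := by
    intro y
    rcases eq_or_ne y 0 with rfl | hy
    · simp [hg]; linarith
    · have hy2 : (0:ℝ) < y ^ 2 := by positivity
      have hb := bern_aux hm2 (le_of_lt hy2)
      rw [abs_of_nonpos (hg_nonpos y)]
      rw [neg_div' ]
      rw [div_le_iff₀ hy2]
      have : (1 + y ^ 2) ^ (m / 2) = (y ^ 2 + 1) ^ (m / 2) := by ring_nf
      nlinarith
  -- measurability and integrability of g
  have hg_cont : Continuous fun y : ℝ => (y ^ 2 + 1) ^ (m / 2) - 1 := by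
    apply Continuous.sub _ continuous_const
    exact Continuous.rpow_const (by continuity) (fun y => Or.inl (by positivity))
  have hg_meas : Measurable g := hg_cont.measurable.div ((continuous_pow 2).measurable)
  have hg_int : ∀ a b : ℝ, IntervalIntegrable g MeasureTheory.volume a b := by
    intro a b
    apply (intervalIntegrable_const (c := -(m / 2))).mono_fun
      (hg_meas.aestronglyMeasurable.restrict)
    filter_upwards with y
    rw [Real.norm_eq_abs, Real.norm_eq_abs]
    exact (hg_bound y).trans (le_abs_self _)
  set I : ℝ → ℝ := fun x => ∫ y in (0:ℝ)..x, g y with hI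
  have hI_cont : Continuous I := intervalIntegral.continuous_primitive hg_int 0
  have hF : ∀ x, hgF m x = 1 - x * I x := fun x => rfl
  -- continuity of Bhat
  have hB_cont : Continuous (Bhat m lam c) := by
    apply Continuous.add
    · exact continuous_const.mul (continuous_const.sub (continuous_id.mul hI_cont))
    · exact continuous_const.mul
        (Continuous.rpow_const (by continuity) (fun x => Or.inl (by positivity)))
  have hm1 : m + 1 < 0 := by linarith
  have habs : |m + 1| = -(m + 1) := abs_of_neg hm1
  have hq : 0 < lam / |m + 1| := by
    apply div_pos hlam; rw [habs]; linarith
  -- value at 0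
  have hB0 : Bhat m lam c 0 = c + lam / |m + 1| := by
    simp [Bhat, hgF, Real.one_rpow]
  have hB0pos : 0 < Bhat m lam c 0 := by
    rw [hB0, habs]
    have : lam / -(m + 1) = -(lam / (m + 1)) := by rw [div_neg]
    rw [this]; linarith
  have htendB : Filter.Tendsto (Bhat m lam c) Filter.atTop Filter.atBot := by
    set K : ℝ := -I 1 with hK
    have hKpos : 0 < K := by
      have h1 : 0 < ∫ y in (0:ℝ)..1, -g y := by
        apply intervalIntegral.intervalIntegral_pos_of_pos_on (hg_int 0 1).neg
        · intro y hy
          simpa using neg_pos.mpr (hg_neg y (ne_of_gt hy.1))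
        · norm_num
      rw [intervalIntegral.integral_neg] at h1
      simpa [hK, hI] using h1
    have hImono : ∀ x : ℝ, 1 ≤ x → I x ≤ I 1 := by
      intro x hx
      have hsplit : I 1 + ∫ y in (1:ℝ)..x, g y = I x :=
        intervalIntegral.integral_add_adjacent_intervals (hg_int 0 1) (hg_int 1 x)
      have hneg : (∫ y in (1:ℝ)..x, g y) ≤ 0 := by
        have h := intervalIntegral.integral_nonneg (f := fun y => -g y) (μ := MeasureTheory.volume) hx
          (fun u _ => neg_nonneg.mpr (hg_nonpos u))
        rw [intervalIntegral.integral_neg] at h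
        linarith
      linarith
    set e : ℝ := m / 2 + 1 with he
    set C : ℝ := max ((2:ℝ) ^ e) 1 with hC
    have hC1 : (1:ℝ) ≤ C := le_max_right _ _
    have hpow_bound : ∀ x : ℝ, 1 ≤ x → (x ^ 2 + 1) ^ e ≤ C * x ^ (m + 2) := by
      intro x hx
      have hx0 : (0:ℝ) < x := by linarith
      have hxx : x ^ (m + 2) = (x ^ 2) ^ e := by
        rw [← Real.rpow_natCast x 2, ← Real.rpow_mul hx0.le]
        congr 1
        push_cast [he]
        ring
      have hx2pos : (0:ℝ) < x ^ 2 := by positivity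
      rcases le_or_gt e 0 with he0 | he0
      · have h1 : (x ^ 2 + 1) ^ e ≤ (x ^ 2) ^ e :=
          Real.rpow_le_rpow_of_nonpos hx2pos (by linarith) he0
        have h2 : (0:ℝ) ≤ (x ^ 2) ^ e := Real.rpow_nonneg hx2pos.le _
        calc (x ^ 2 + 1) ^ e ≤ (x ^ 2) ^ e := h1
          _ ≤ C * (x ^ 2) ^ e := by nlinarith
          _ = C * x ^ (m + 2) := by rw [hxx]
      · have hle : x ^ 2 + 1 ≤ 2 * x ^ 2 := by nlinarith
        have h1 : (x ^ 2 + 1) ^ e ≤ (2 * x ^ 2) ^ e :=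
          Real.rpow_le_rpow (by positivity) hle he0.le
        have h2 : (2 * x ^ 2 : ℝ) ^ e = 2 ^ e * (x ^ 2) ^ e :=
          Real.mul_rpow (by norm_num) hx2pos.le
        have h3 : (2:ℝ) ^ e ≤ C := le_max_left _ _
        have h4 : (0:ℝ) ≤ (x ^ 2) ^ e := Real.rpow_nonneg hx2pos.le _
        calc (x ^ 2 + 1) ^ e ≤ 2 ^ e * (x ^ 2) ^ e := by rw [← h2]; exact h1
          _ ≤ C * (x ^ 2) ^ e := by nlinarith
          _ = C * x ^ (m + 2) := by rw [hxx]
    have hmain : ∀ x : ℝ, 1 ≤ x →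
        Bhat m lam c x ≤ c + x * (c * K + lam / |m + 1| * C * x ^ (m + 1)) := by
      intro x hx
      have hx0 : (0:ℝ) < x := by linarith
      have hIx : I x ≤ I 1 := hImono x hx
      have hterm1 : c * hgF m x ≤ c + c * K * x := by
        rw [hF]
        have h1 : 1 + K * x ≤ 1 - x * I x := by
          have : K ≤ -I x := by simp only [hK]; linarith
          nlinarith
        nlinarith
      have hterm2 : lam / |m + 1| * (x ^ 2 + 1) ^ e ≤
          lam / |m + 1| * C * (x * x ^ (m + 1)) := by
        have h1 := hpow_bound x hx
        have h2 : x ^ (m + 2) = x * x ^ (m + 1) := by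
          rw [show m + 2 = 1 + (m + 1) by ring, Real.rpow_add hx0, Real.rpow_one]
        rw [← h2]
        calc lam / |m + 1| * (x ^ 2 + 1) ^ e ≤ lam / |m + 1| * (C * x ^ (m + 2)) := by
              exact mul_le_mul_of_nonneg_left h1 hq.le
          _ = lam / |m + 1| * C * x ^ (m + 2) := by ring
      have : Bhat m lam c x = c * hgF m x + lam / |m + 1| * (x ^ 2 + 1) ^ e := rfl
      rw [this]
      have hring : c + x * (c * K + lam / |m + 1| * C * x ^ (m + 1)) =
          (c + c * K * x) + lam / |m + 1| * C * (x * x ^ (m + 1)) := by ring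
      rw [hring]
      exact add_le_add hterm1 hterm2
    -- the bounding function tends to atBot
    have htend : Filter.Tendsto
        (fun x : ℝ => c + x * (c * K + lam / |m + 1| * C * x ^ (m + 1)))
        Filter.atTop Filter.atBot := by
      apply Filter.tendsto_atBot_add_const_left
      apply Filter.Tendsto.atTop_mul_neg (C := c * K) (by nlinarith)
        Filter.tendsto_id
      have h0 : Filter.Tendsto (fun x : ℝ => x ^ (m + 1)) Filter.atTop (nhds 0) := by
        have := tendsto_rpow_neg_atTop (y := -(m + 1)) (by linarith)
        simpa using this
      have : Filter.Tendsto (fun x : ℝ => lam / |m + 1| * C * x ^ (m + 1))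
          Filter.atTop (nhds 0) := by
        simpa using h0.const_mul (lam / |m + 1| * C)
      simpa using Filter.Tendsto.const_add (c * K) this
    apply Filter.tendsto_atBot_mono' _ _ htend
    filter_upwards [Filter.eventually_ge_atTop (1:ℝ)] with x hx
    exact hmain x hx
  refine ⟨hB0pos, htendB, ?_⟩
  have hev : ∀ᶠ x in Filter.atTop, Bhat m lam c x < 0 :=
    htendB.eventually (Filter.eventually_lt_atBot 0)
  obtain ⟨X, hXneg, hX0⟩ := (hev.and (Filter.eventually_gt_atTop 0)).exists
  have hIVT := intermediate_value_Ioo' (le_of_lt hX0) hB_cont.continuousOn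
  have h0mem : (0:ℝ) ∈ Set.Ioo (Bhat m lam c X) (Bhat m lam c 0) := ⟨hXneg, hB0pos⟩
  obtain ⟨x, hx, hfx⟩ := hIVT h0mem
  exact ⟨x, hx.1, hfx⟩
end

section
/- Let γ > 0 and m ≠ 0. Define G(x) = F̂(x) - F̂(γ/x) for x > 0, where F̂ is a differentiable function on (0,∞) with F̂'(x) = -(x²+1)^{m/2}(x² - γ)/x². Then G'(x) = (γ/x² - 1)·((x²+1)^{m/2} - (γ²/x² + 1)^{m/2}), and G'(x) = 0 for x > 0 if and only if x = √γ. -/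
open Real

lemma hasDerivAt_comp_const_div {f : ℝ → ℝ} {f' c x : ℝ} (hx : x ≠ 0)
    (hf : HasDerivAt f f' (c / x)) :
    HasDerivAt (fun t => f (c / t)) (f' * -(c / x ^ 2)) x := by
  have hinner : HasDerivAt (fun t : ℝ => c / t) (-(c / x ^ 2)) x := by
    simpa [div_eq_mul_inv, neg_div] using (hasDerivAt_inv hx).const_mul c
  exact hf.comp x hinner

-- The two terms of `F̂'(x) + F̂'(γ/x) γ/x²` share the factor `γ/x² - 1`.
lemma hasDerivAt_sub_comp_const_div {F : ℝ → ℝ} {γ m x : ℝ} (hγ : 0 < γ) (hx : 0 < x)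
    (hF : ∀ y > (0 : ℝ), HasDerivAt F (-(y ^ 2 + 1) ^ (m / 2) * (y ^ 2 - γ) / y ^ 2) y) :
    HasDerivAt (fun t => F t - F (γ / t))
      ((γ / x ^ 2 - 1) * ((x ^ 2 + 1) ^ (m / 2) - (γ ^ 2 / x ^ 2 + 1) ^ (m / 2))) x := by
  refine ((hF x hx).sub
    (hasDerivAt_comp_const_div hx.ne' (hF (γ / x) (div_pos hγ hx)))).congr_deriv ?_
  rw [div_pow]
  field_simp
  ring

lemma sq_eq_sq_div_sq_iff {x γ : ℝ} (hx : x ≠ 0) (hγ : 0 ≤ γ) :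
    x ^ 2 = γ ^ 2 / x ^ 2 ↔ x ^ 2 = γ := by
  rw [eq_div_iff (pow_ne_zero 2 hx), ← sq, pow_left_inj₀ (by positivity) hγ two_ne_zero]

-- Both factors vanish exactly when `x² = γ`: the second one because `y ↦ y ^ (m / 2)` is
-- injective on `[0, ∞)` for `m ≠ 0`.
lemma sub_one_mul_rpow_sub_rpow_eq_zero_iff {γ m x : ℝ} (hγ : 0 < γ) (hm : m ≠ 0) (hx : 0 < x) :
    (γ / x ^ 2 - 1) * ((x ^ 2 + 1) ^ (m / 2) - (γ ^ 2 / x ^ 2 + 1) ^ (m / 2)) = 0 ↔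
      x = √γ := by
  rw [mul_eq_zero, sub_eq_zero, sub_eq_zero, div_eq_one_iff_eq (by positivity),
    rpow_left_inj (by positivity) (by positivity) (div_ne_zero hm two_ne_zero), add_left_inj,
    sq_eq_sq_div_sq_iff hx.ne' hγ.le, eq_comm, or_self, eq_comm (a := x),
    sqrt_eq_iff_eq_sq hγ.le hx.le, eq_comm]

/-- Lemma 4.4, λ > 0 case: if `F̂' (x) = -(x²+1)^{m/2}(x² - γ)/x²` and
`G(x) = F̂(x) - F̂(γ/x)`, then `G'(x) = (γ/x² - 1)((x²+1)^{m/2} - (γ²/x² + 1)^{m/2})`,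
which vanishes for `x > 0` iff `x = √γ`. -/
theorem deriv_G_parity (γ m : ℝ) (hγ : 0 < γ) (hm : m ≠ 0) (Fhat : ℝ → ℝ)
    (hF : ∀ x > (0 : ℝ),
      HasDerivAt Fhat (-(x ^ 2 + 1) ^ (m / 2) * (x ^ 2 - γ) / x ^ 2) x) :
    ∀ x > (0 : ℝ),
      deriv (fun t => Fhat t - Fhat (γ / t)) x
          = (γ / x ^ 2 - 1) * ((x ^ 2 + 1) ^ (m / 2) - (γ ^ 2 / x ^ 2 + 1) ^ (m / 2)) ∧
        (deriv (fun t => Fhat t - Fhat (γ / t)) x = 0 ↔ x = Real.sqrt γ) := by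
  intro x hx
  rw [(hasDerivAt_sub_comp_const_div hγ hx hF).deriv]
  exact ⟨rfl, sub_one_mul_rpow_sub_rpow_eq_zero_iff hγ hm hx⟩
end

section
/- Let m > 0 and define H(u) for u > 1/(m+1) by H(u) = (u - 1/(m+1))^{-1/2} · ( F(√(u - 1/(m+1))) - (u + 1 - 1/(m+1))^{m/2+1}/(u(m+1)) ), where F(x) = 1 - x·∫₀ˣ ((y²+1)^{m/2}-1)/y² dy. Then H'(u) = -m(1 + u - 1/(m+1))^{m/2}·√(u - 1/(m+1)) / ((m+1)u²), so H is strictly decreasing on (1/(m+1), ∞). -/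
open Real

/-- The function `H` from the parity lemma. -/
noncomputable def Hfun (m : ℝ) (u : ℝ) : ℝ :=
  (hgF m (Real.sqrt (u - 1 / (m + 1)))
      - (u + 1 - 1 / (m + 1)) ^ (m / 2 + 1) / (u * (m + 1)))
    / Real.sqrt (u - 1 / (m + 1))

/-!
Writing `x = √(u - 1/(m+1))`, `H(u)` is `F(x)/x` minus an explicit rpow quotient, and
`F(x)/x = 1/x - ∫₀ˣ g` where `g(y) = ((1 + y²)^{m/2} - 1)/y²` is the slope of `t ↦ (1 + t)^{m/2}`
between `0` and `y²`. Replacing it by `dslope` makes `g` continuous without changing the integral,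
so the fundamental theorem of calculus gives `(F(x)/x)' = -(1 + x²)^{m/2}/x²`. The chain rule and a
rational identity in `x` (using `(m+1)u = (m+1)x² + 1`) then give `H'`, which is negative.
-/

lemma continuous_dslope_one_add_rpow_comp_sq (p : ℝ) :
    Continuous fun y : ℝ => dslope (fun t : ℝ => (1 + t) ^ p) 0 (y ^ 2) := by
  have hφ : ContinuousOn (dslope (fun t : ℝ => (1 + t) ^ p) 0) (Set.Ioi (-1)) := by
    refine (continuousOn_dslope (Ioi_mem_nhds (by norm_num))).2 ⟨?_, ?_⟩
    · exact fun t ht => ((continuous_const_add 1).continuousAt.rpow_const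
        (Or.inl (by simp only [Set.mem_Ioi] at ht; linarith))).continuousWithinAt
    · exact ((differentiableAt_const _).add differentiableAt_id).rpow_const (by norm_num)
  exact hφ.comp_continuous (continuous_pow 2) fun y => by
    simp only [Set.mem_Ioi]; nlinarith [sq_nonneg y]

lemma dslope_one_add_rpow_sq_of_ne_zero (p : ℝ) {y : ℝ} (hy : y ≠ 0) :
    dslope (fun t : ℝ => (1 + t) ^ p) 0 (y ^ 2) = ((y ^ 2 + 1) ^ p - 1) / y ^ 2 := by
  rw [dslope_of_ne _ (pow_ne_zero 2 hy), slope_def_field]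
  simp [add_comm]

lemma hgF_div_eq (m x : ℝ) :
    hgF m x / x = x⁻¹ - ∫ y in (0:ℝ)..x, dslope (fun t : ℝ => (1 + t) ^ (m / 2)) 0 (y ^ 2) := by
  have hint : (∫ y in (0:ℝ)..x, ((y ^ 2 + 1) ^ (m / 2) - 1) / y ^ 2)
      = ∫ y in (0:ℝ)..x, dslope (fun t : ℝ => (1 + t) ^ (m / 2)) 0 (y ^ 2) := by
    refine intervalIntegral.integral_congr_ae ?_
    filter_upwards [(Set.countable_singleton (0:ℝ)).ae_notMem _] with y hy _
    exact (dslope_one_add_rpow_sq_of_ne_zero _ hy).symm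
  rcases eq_or_ne x 0 with rfl | hx
  · simp
  · rw [hgF, hint]
    field_simp

lemma hasDerivAt_hgF_div (m : ℝ) {x : ℝ} (hx : x ≠ 0) :
    HasDerivAt (fun t => hgF m t / t) (-(1 + x ^ 2) ^ (m / 2) / x ^ 2) x := by
  have hg := continuous_dslope_one_add_rpow_comp_sq (m / 2)
  have hJ := intervalIntegral.integral_hasDerivAt_right (hg.intervalIntegrable 0 x)
    (hg.stronglyMeasurableAtFilter _ _) hg.continuousAt
  simp only [hgF_div_eq]
  refine ((hasDerivAt_inv hx).sub hJ).congr_deriv ?_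
  rw [dslope_one_add_rpow_sq_of_ne_zero _ hx, add_comm (x ^ 2)]
  field_simp
  ring

lemma hasDerivAt_Hfun (m : ℝ) (hm : 0 < m + 1) {u : ℝ} (hu : 1 / (m + 1) < u) :
    HasDerivAt (Hfun m)
      (-(m * (1 + u - 1 / (m + 1)) ^ (m / 2) * Real.sqrt (u - 1 / (m + 1)))
        / ((m + 1) * u ^ 2)) u := by
  set c := 1 / (m + 1) with hc
  have hu0 : 0 < u := lt_trans (by positivity) hu
  set x := Real.sqrt (u - c) with hxdef
  have hx : 0 < x := Real.sqrt_pos.2 (sub_pos.2 hu)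
  have hux : u = x ^ 2 + c := by rw [Real.sq_sqrt (sub_pos.2 hu).le]; ring
  have hsqrt : HasDerivAt (fun v => Real.sqrt (v - c)) (1 / (2 * x)) u := by
    simpa [Function.comp_def, ← hxdef] using
      (Real.hasDerivAt_sqrt (sub_pos.2 hu).ne').comp u ((hasDerivAt_id u).sub_const c)
  have hF : HasDerivAt (fun v => hgF m (Real.sqrt (v - c)) / Real.sqrt (v - c))
      (-(1 + x ^ 2) ^ (m / 2) / x ^ 2 * (1 / (2 * x))) u :=
    (hasDerivAt_hgF_div m hx.ne').comp (h₂ := fun t => hgF m t / t) u hsqrt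
  have hB : HasDerivAt (fun v => (v + 1 - c) ^ (m / 2 + 1) / (v * (m + 1)))
      (((m / 2 + 1) * (u + 1 - c) ^ (m / 2) * (u * (m + 1)) - (u + 1 - c) ^ (m / 2 + 1) * (m + 1))
        / (u * (m + 1)) ^ 2) u := by
    have hpow := (((hasDerivAt_id u).add_const 1).sub_const c).rpow_const (p := m / 2 + 1)
      (Or.inl (by simp only [id]; linarith))
    simp only [id, add_sub_cancel_right, one_mul] at hpow
    exact hpow.div (hasDerivAt_mul_const (m + 1)) (by positivity)
  have hH : Hfun m = fun v => hgF m (Real.sqrt (v - c)) / Real.sqrt (v - c)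
      - (v + 1 - c) ^ (m / 2 + 1) / (v * (m + 1)) / Real.sqrt (v - c) := by
    funext v
    exact sub_div _ _ _
  rw [hH]
  refine (hF.sub (hB.div hsqrt hx.ne')).congr_deriv ?_
  have hbase : u + 1 - c = 1 + x ^ 2 := by rw [hux]; ring
  rw [← hxdef, add_comm 1 u, hbase, Real.rpow_add_one (by positivity), hux, hc]
  field_simp
  ring

/-- For `m > 0`, `H'(u) = -m(1+u-1/(m+1))^{m/2}√(u-1/(m+1)) / ((m+1)u²)`, so `H` is
strictly decreasing on `(1/(m+1), ∞)`. -/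
theorem Hfun_deriv_and_strictAnti (m : ℝ) (hm : 0 < m) :
    (∀ u > 1 / (m + 1),
        deriv (Hfun m) u
          = -(m * (1 + u - 1 / (m + 1)) ^ (m / 2) * Real.sqrt (u - 1 / (m + 1)))
              / ((m + 1) * u ^ 2)) ∧
      StrictAntiOn (Hfun m) (Set.Ioi (1 / (m + 1))) := by
  have hm1 : 0 < m + 1 := by linarith
  refine ⟨fun u hu => (hasDerivAt_Hfun m hm1 hu).deriv, strictAntiOn_of_deriv_neg (convex_Ioi _)
    (fun u hu => (hasDerivAt_Hfun m hm1 hu).continuousAt.continuousWithinAt) fun u hu => ?_⟩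
  rw [interior_Ioi, Set.mem_Ioi] at hu
  have hu0 : 0 < u := lt_trans (by positivity) hu
  rw [(hasDerivAt_Hfun m hm1 hu).deriv]
  refine div_neg_of_neg_of_pos (neg_neg_of_pos ?_) (by positivity)
  exact mul_pos (mul_pos hm (rpow_pos_of_pos (by linarith) _)) (Real.sqrt_pos.2 (by linarith))
end
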